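/- Let σ₀ > 0, δ ∈ (0, π/2). Fix ω ∈ (0, 2π), set c₁ := cos(ω/2), c₂ := sin(ω/2), and fix μ > 0. There exists a constant C = C(ω, μ, δ) such that for every s ∈ 𝒮 and every continuously differentiable g : [−1,1] → ℂ, the angular-derivative jump N(r) := −( g'(r c₁) − g'(−r c₁) ) c₂ e^{−s μ c₂ r} − s μ c₁ ( g(r c₁) − g(−r c₁) ) e^{−s μ c₂ r} satisfies ∫₀¹ |N(r)|² dr ≤ C · ∫_{−1}^{1} |g'(τ)|² dτ. -/

import Mathlib

open Real Complex MeasureTheory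

/-!
Write `N(r) = -(D(r) c₂ + s μ c₁ G(r)) E(r)` with `D(r) = g'(r c₁) - g'(-r c₁)`,
`G(r) = g(r c₁) - g(-r c₁)` and `|E(r)|² = e^{-2ar}`, `a = μ c₂ Re s`.
The `D`-part is controlled by the substitution `τ = ± r c₁`, which costs a factor `1 / |c₁|`.
For the `G`-part, the fundamental theorem of calculus and Cauchy–Schwarz give
`|G(r)|² ≤ 2 r |c₁| ‖g'‖²`, and then `∫₀¹ r e^{-2ar} dr ≤ 1 / (4a²)` absorbs the factor `|s|²`
because `|s| sin δ ≤ Re s` on the sector. If `c₁ = 0` then `N` vanishes identically.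
-/

open Set
open scoped Interval

section CauchySchwarz

variable {α : Type*} [MeasurableSpace α] {μ : Measure α}

theorem sq_setIntegral_le_measureReal_mul_setIntegral_sq {t : Set α} (ht : μ t ≠ ⊤) {f : α → ℝ}
    (hf : IntegrableOn f t μ) (hf2 : IntegrableOn (fun x ↦ f x ^ 2) t μ) :
    (∫ x in t, f x ∂μ) ^ 2 ≤ μ.real t * ∫ x in t, f x ^ 2 ∂μ := by
  rcases eq_or_ne (μ t) 0 with h0 | h0
  · simp [Measure.restrict_eq_zero.2 h0]
  have hjensen := (even_two.convexOn_pow (𝕜 := ℝ)).map_set_average_le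
    (continuous_pow 2).continuousOn isClosed_univ h0 ht (ae_of_all _ fun _ ↦ mem_univ _) hf hf2
  have hm : 0 < μ.real t := ENNReal.toReal_pos h0 ht
  simp only [setAverage_eq, smul_eq_mul, mul_pow, inv_pow] at hjensen
  rwa [inv_mul_le_iff₀ (by positivity), sq (μ.real t), mul_assoc,
    mul_inv_cancel_left₀ hm.ne'] at hjensen

end CauchySchwarz

section ContDiffOnIcc

variable {E : Type*} [NormedAddCommGroup E] [NormedSpace ℝ E] {g : ℝ → E} {a b : ℝ}

theorem ContDiffOn.integrableOn_norm_deriv_sq (hg : ContDiffOn ℝ 1 g (Icc a b)) (hab : a < b) :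
    IntegrableOn (fun τ ↦ ‖deriv g τ‖ ^ 2) (Ioo a b) := by
  have hcont := hg.continuousOn_derivWithin (uniqueDiffOn_Icc hab) le_rfl
  refine ((hcont.norm.pow 2).integrableOn_Icc.mono_set Ioo_subset_Icc_self).congr_fun
    (fun τ hτ ↦ ?_) measurableSet_Ioo
  simp [derivWithin_of_mem_nhds (Icc_mem_nhds hτ.1 hτ.2)]

theorem ContDiffOn.norm_sub_sq_le [CompleteSpace E] (hg : ContDiffOn ℝ 1 g (Icc a b)) {x y : ℝ}
    (hax : a < x) (hxy : x ≤ y) (hyb : y < b) :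
    ‖g y - g x‖ ^ 2 ≤ (y - x) * ∫ τ in Ioo a b, ‖deriv g τ‖ ^ 2 := by
  have hsub : Icc x y ⊆ Ioo a b := Icc_subset_Ioo hax hyb
  have hcont : ContinuousOn (deriv g) (Icc x y) :=
    ((hg.mono Ioo_subset_Icc_self).continuousOn_deriv_of_isOpen isOpen_Ioo le_rfl).mono hsub
  have hftc : ∫ τ in x..y, deriv g τ = g y - g x := by
    refine intervalIntegral.integral_eq_sub_of_hasDerivAt (fun τ hτ ↦ ?_)
      (hcont.intervalIntegrable_of_Icc hxy)
    rw [uIcc_of_le hxy] at hτ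
    have hτ' := hsub hτ
    exact ((hg.differentiableOn one_ne_zero τ (Ioo_subset_Icc_self hτ')).differentiableAt
      (Icc_mem_nhds hτ'.1 hτ'.2)).hasDerivAt
  calc ‖g y - g x‖ ^ 2 ≤ (∫ τ in Ioc x y, ‖deriv g τ‖) ^ 2 := by
        rw [← hftc, ← intervalIntegral.integral_of_le hxy]
        gcongr
        exact intervalIntegral.norm_integral_le_integral_norm hxy
    _ ≤ (y - x) * ∫ τ in Ioc x y, ‖deriv g τ‖ ^ 2 := by
        have hi : IntegrableOn (fun τ ↦ ‖deriv g τ‖) (Ioc x y) :=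
          hcont.norm.integrableOn_Icc.mono_set Ioc_subset_Icc_self
        have hi2 : IntegrableOn (fun τ ↦ ‖deriv g τ‖ ^ 2) (Ioc x y) :=
          (hcont.norm.pow 2).integrableOn_Icc.mono_set Ioc_subset_Icc_self
        simpa [Real.volume_real_Ioc_of_le hxy] using
          sq_setIntegral_le_measureReal_mul_setIntegral_sq measure_Ioc_lt_top.ne hi hi2
    _ ≤ (y - x) * ∫ τ in Ioo a b, ‖deriv g τ‖ ^ 2 := by
        refine mul_le_mul_of_nonneg_left ?_ (sub_nonneg.2 hxy)
        exact setIntegral_mono_set (hg.integrableOn_norm_deriv_sq (hax.trans (hxy.trans_lt hyb)))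
          (ae_of_all _ fun _ ↦ by positivity) (Ioc_subset_Icc_self.trans hsub).eventuallyLE

theorem ContDiffOn.norm_sub_neg_sq_le [CompleteSpace E] (hg : ContDiffOn ℝ 1 g (Icc a b)) {x : ℝ}
    (hax : a < -|x|) (hxb : |x| < b) :
    ‖g x - g (-x)‖ ^ 2 ≤ 2 * |x| * ∫ τ in Ioo a b, ‖deriv g τ‖ ^ 2 := by
  rcases le_total 0 x with hx | hx
  · rw [abs_of_nonneg hx] at hax hxb ⊢
    convert hg.norm_sub_sq_le hax (by linarith) hxb using 2
    ring
  · rw [abs_of_nonpos hx] at hax hxb ⊢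
    rw [norm_sub_rev]
    convert hg.norm_sub_sq_le (x := x) (y := -x) (by linarith) (by linarith) (by linarith) using 2
    ring

end ContDiffOnIcc

section Rescaling

variable {F : ℝ → ℝ} {e : ℝ}

theorem uIoc_zero_subset_Ioo (he : |e| < 1) : Ι 0 e ⊆ Ioo (-1) 1 := by
  intro t ht
  obtain ⟨he₁, he₂⟩ := abs_lt.1 he
  rcases mem_uIoc.1 ht with ⟨h₁, h₂⟩ | ⟨h₁, h₂⟩ <;> constructor <;> linarith

theorem MeasureTheory.IntegrableOn.comp_mul_right_Ioo (hF : IntegrableOn F (Ioo (-1) 1))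
    (he₀ : e ≠ 0) (he : |e| < 1) : IntegrableOn (fun r ↦ F (r * e)) (Ioo 0 1) := by
  have hFe : IntervalIntegrable F volume 0 e :=
    (intervalIntegrable_iff.2 (hF.mono_set (uIoc_zero_subset_Ioo he)))
  have := hFe.comp_mul_right (c := e)
  rw [zero_div, div_self he₀] at this
  exact (intervalIntegrable_iff_integrableOn_Ioc_of_le zero_le_one).1 this |>.mono_set
    Ioo_subset_Ioc_self

theorem setIntegral_comp_mul_right_Ioo_le (hF₀ : ∀ x, 0 ≤ F x) (hF : IntegrableOn F (Ioo (-1) 1))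
    (he₀ : e ≠ 0) (he : |e| < 1) :
    ∫ r in Ioo 0 1, F (r * e) ≤ |e|⁻¹ * ∫ τ in Ioo (-1) 1, F τ :=
  calc ∫ r in Ioo 0 1, F (r * e) = e⁻¹ * ∫ τ in 0..e, F τ := by
        rw [← integral_Ioc_eq_integral_Ioo, ← intervalIntegral.integral_of_le zero_le_one,
          intervalIntegral.integral_comp_mul_right F he₀]
        simp
    _ ≤ |e⁻¹ * ∫ τ in 0..e, F τ| := le_abs_self _
    _ ≤ |e|⁻¹ * ∫ τ in Ι 0 e, F τ := by
        rw [abs_mul, abs_inv]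
        gcongr
        simpa [abs_of_nonneg (hF₀ _)] using
          intervalIntegral.norm_integral_le_integral_norm_uIoc (f := F) (μ := volume)
    _ ≤ |e|⁻¹ * ∫ τ in Ioo (-1) 1, F τ := by
        refine mul_le_mul_of_nonneg_left ?_ (by positivity)
        exact setIntegral_mono_set hF (ae_of_all _ fun x ↦ hF₀ x)
          (uIoc_zero_subset_Ioo he).eventuallyLE

theorem MeasureTheory.IntegrableOn.comp_mul_add_comp_neg_mul_Ioo
    (hF : IntegrableOn F (Ioo (-1) 1)) (he₀ : e ≠ 0) (he : |e| < 1) :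
    IntegrableOn (fun r ↦ F (r * e) + F (-(r * e))) (Ioo 0 1) := by
  simp_rw [← mul_neg]
  exact (hF.comp_mul_right_Ioo he₀ he).fun_add
    (hF.comp_mul_right_Ioo (neg_ne_zero.2 he₀) (by rwa [abs_neg]))

theorem setIntegral_comp_mul_add_comp_neg_mul_Ioo_le (hF₀ : ∀ x, 0 ≤ F x)
    (hF : IntegrableOn F (Ioo (-1) 1)) (he₀ : e ≠ 0) (he : |e| < 1) :
    ∫ r in Ioo 0 1, (F (r * e) + F (-(r * e))) ≤ 2 * |e|⁻¹ * ∫ τ in Ioo (-1) 1, F τ := by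
  have he' : |-e| < 1 := by rwa [abs_neg]
  simp_rw [← mul_neg]
  rw [integral_add (hF.comp_mul_right_Ioo he₀ he) (hF.comp_mul_right_Ioo (neg_ne_zero.2 he₀) he')]
  have := setIntegral_comp_mul_right_Ioo_le hF₀ hF (neg_ne_zero.2 he₀) he'
  rw [abs_neg] at this
  linarith [setIntegral_comp_mul_right_Ioo_le hF₀ hF he₀ he]

theorem integral_mul_exp_neg_mul_Ioo_le {c : ℝ} (hc : 0 < c) :
    ∫ r in Ioo 0 1, r * rexp (-(c * r)) ≤ 1 / c ^ 2 := by
  rw [← integral_Ioc_eq_integral_Ioo, ← intervalIntegral.integral_of_le zero_le_one]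
  simpa using intervalIntegral_pow_mul_exp_neg_le (k := 1) zero_le_one hc

end Rescaling

theorem Complex.norm_mul_sin_le_re {s : ℂ} {δ : ℝ} (hδ : 0 ≤ δ) (hs : |arg s| ≤ π / 2 - δ) :
    ‖s‖ * Real.sin δ ≤ s.re := by
  rw [← norm_mul_cos_arg, ← Real.cos_pi_div_two_sub, ← Real.cos_abs (arg s)]
  exact mul_le_mul_of_nonneg_left
    (Real.cos_le_cos_of_nonneg_of_le_pi (abs_nonneg _) (by linarith [pi_pos]) hs) (norm_nonneg _)

/-- The jump `N(r)` of the paper, in terms of `c₁ = cos (ω / 2)` and `c₂ = sin (ω / 2)`. -/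
noncomputable def interfaceJump (g : ℝ → ℂ) (s : ℂ) (μ c₁ c₂ r : ℝ) : ℂ :=
  -((deriv g (r * c₁) - deriv g (-(r * c₁))) * c₂ * Complex.exp (-s * μ * c₂ * r)) -
    s * μ * c₁ * (g (r * c₁) - g (-(r * c₁))) * Complex.exp (-s * μ * c₂ * r)

section InterfaceJump

variable {g : ℝ → ℂ} {s : ℂ} {μ c₁ c₂ : ℝ}

theorem norm_interfaceJump_sq_le (hg : ContDiffOn ℝ 1 g (Icc (-1) 1)) (hs : 0 ≤ s.re)
    (hμ : 0 ≤ μ) (hc₁ : |c₁| < 1) (hc₂ : 0 ≤ c₂) {r : ℝ} (hr₀ : 0 ≤ r) (hr₁ : r ≤ 1) :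
    ‖interfaceJump g s μ c₁ c₂ r‖ ^ 2 ≤
      4 * c₂ ^ 2 * (‖deriv g (r * c₁)‖ ^ 2 + ‖deriv g (-(r * c₁))‖ ^ 2) +
        4 * ‖s‖ ^ 2 * μ ^ 2 * |c₁| ^ 3 * (∫ τ in Ioo (-1) 1, ‖deriv g τ‖ ^ 2) *
          (r * rexp (-(2 * (s.re * μ * c₂) * r))) := by
  set E := Complex.exp (-s * μ * c₂ * r)
  set D := deriv g (r * c₁) - deriv g (-(r * c₁))
  set G := g (r * c₁) - g (-(r * c₁))
  have hE : ‖E‖ ^ 2 = rexp (-(2 * (s.re * μ * c₂) * r)) := by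
    rw [Complex.norm_exp, sq, ← Real.exp_add]
    congr 1
    simp only [neg_mul, neg_re, mul_re, ofReal_re, ofReal_im, mul_zero, sub_zero, mul_im, zero_add]
    ring
  have hE₁ : ‖E‖ ^ 2 ≤ 1 := by
    rw [hE, Real.exp_le_one_iff, neg_nonpos]
    positivity
  have hrc : |r * c₁| = r * |c₁| := by rw [abs_mul, abs_of_nonneg hr₀]
  have hrc₁ : r * |c₁| < 1 := by nlinarith [abs_nonneg c₁]
  have hD : ‖D‖ ^ 2 ≤ 2 * (‖deriv g (r * c₁)‖ ^ 2 + ‖deriv g (-(r * c₁))‖ ^ 2) :=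
    (pow_le_pow_left₀ (norm_nonneg _) (norm_sub_le _ _) 2).trans add_sq_le
  have hG : ‖G‖ ^ 2 ≤ 2 * (r * |c₁|) * ∫ τ in Ioo (-1) 1, ‖deriv g τ‖ ^ 2 := by
    rw [← hrc]
    exact hg.norm_sub_neg_sq_le (by rw [hrc]; linarith) (by rw [hrc]; exact hrc₁)
  calc ‖interfaceJump g s μ c₁ c₂ r‖ ^ 2
      ≤ 2 * (‖D * c₂ * E‖ ^ 2 + ‖s * μ * c₁ * G * E‖ ^ 2) := by
        rw [interfaceJump, ← neg_add', norm_neg]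
        exact (pow_le_pow_left₀ (norm_nonneg _) (norm_add_le _ _) 2).trans add_sq_le
    _ = 2 * (c₂ ^ 2 * ‖D‖ ^ 2 * ‖E‖ ^ 2 + ‖s‖ ^ 2 * μ ^ 2 * |c₁| ^ 2 * ‖G‖ ^ 2 * ‖E‖ ^ 2) := by
        simp only [norm_mul, Complex.norm_real, Real.norm_eq_abs, mul_pow, sq_abs]
        ring
    _ ≤ 2 * (c₂ ^ 2 * (2 * (‖deriv g (r * c₁)‖ ^ 2 + ‖deriv g (-(r * c₁))‖ ^ 2)) * 1 +
          ‖s‖ ^ 2 * μ ^ 2 * |c₁| ^ 2 * (2 * (r * |c₁|) * ∫ τ in Ioo (-1) 1, ‖deriv g τ‖ ^ 2) *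
            ‖E‖ ^ 2) := by
        gcongr
    _ = _ := by
        rw [hE]
        ring

theorem integral_norm_interfaceJump_sq_le (hg : ContDiffOn ℝ 1 g (Icc (-1) 1)) (hs : 0 < s.re)
    (hμ : 0 < μ) (hc₁₀ : c₁ ≠ 0) (hc₁ : |c₁| < 1) (hc₂ : 0 < c₂) :
    ∫ r in Ioo 0 1, ‖interfaceJump g s μ c₁ c₂ r‖ ^ 2 ≤
      (8 * c₂ ^ 2 / |c₁| + ‖s‖ ^ 2 * |c₁| ^ 3 / (s.re ^ 2 * c₂ ^ 2)) *
        ∫ τ in Ioo (-1) 1, ‖deriv g τ‖ ^ 2 := by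
  set I := ∫ τ in Ioo (-1) 1, ‖deriv g τ‖ ^ 2
  set a := s.re * μ * c₂
  set K := 4 * ‖s‖ ^ 2 * μ ^ 2 * |c₁| ^ 3 * I
  have ha : 0 < a := by positivity
  have hF := hg.integrableOn_norm_deriv_sq (by norm_num : (-1 : ℝ) < 1)
  have hF₀ : ∀ τ, 0 ≤ ‖deriv g τ‖ ^ 2 := fun _ ↦ by positivity
  have hD_int := hF.comp_mul_add_comp_neg_mul_Ioo hc₁₀ hc₁
  have hX_int : IntegrableOn (fun r ↦ r * rexp (-(2 * a * r))) (Ioo 0 1) :=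
    (by fun_prop : Continuous fun r ↦ r * rexp (-(2 * a * r))).integrableOn_Icc.mono_set
      Ioo_subset_Icc_self
  calc ∫ r in Ioo 0 1, ‖interfaceJump g s μ c₁ c₂ r‖ ^ 2
      ≤ ∫ r in Ioo 0 1, (4 * c₂ ^ 2 * (‖deriv g (r * c₁)‖ ^ 2 + ‖deriv g (-(r * c₁))‖ ^ 2) +
          K * (r * rexp (-(2 * a * r)))) :=
        integral_mono_of_nonneg (ae_of_all _ fun _ ↦ by positivity)
          ((hD_int.const_mul _).fun_add (hX_int.const_mul _))
          ((ae_restrict_iff' measurableSet_Ioo).2 (ae_of_all _ fun r hr ↦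
            norm_interfaceJump_sq_le hg hs.le hμ.le hc₁ hc₂.le hr.1.le hr.2.le))
    _ = 4 * c₂ ^ 2 * (∫ r in Ioo 0 1, (‖deriv g (r * c₁)‖ ^ 2 + ‖deriv g (-(r * c₁))‖ ^ 2)) +
          K * ∫ r in Ioo 0 1, r * rexp (-(2 * a * r)) := by
        rw [integral_add (hD_int.const_mul _) (hX_int.const_mul _), integral_const_mul,
          integral_const_mul]
    _ ≤ 4 * c₂ ^ 2 * (2 * |c₁|⁻¹ * I) + K * (1 / (2 * a) ^ 2) := by
        gcongr
        · exact setIntegral_comp_mul_add_comp_neg_mul_Ioo_le hF₀ hF hc₁₀ hc₁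
        · exact integral_mul_exp_neg_mul_Ioo_le (by positivity)
    _ = _ := by
        field_simp
        ring

end InterfaceJump

/-- Angular-derivative (normal-derivative) jump estimate at a corner: with `c₁ = cos(ω/2)`,
`c₂ = sin(ω/2)`, `μ > 0`, there is `C = C(ω, μ, δ)` such that for every `s` in the sector `𝒮`
(any `σ₀ > 0`) and every `C¹` function `g : [-1,1] → ℂ`, the angular-derivative jump
`N(r) = -(g'(r c₁) - g'(-r c₁)) c₂ e^{-s μ c₂ r} - s μ c₁ (g(r c₁) - g(-r c₁)) e^{-s μ c₂ r}`
satisfies `∫₀¹ |N(r)|² dr ≤ C ∫_{-1}^{1} |g'|²`. -/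
theorem corner_angular_jump_estimate (δ ω μ : ℝ) (hδ : δ ∈ Set.Ioo 0 (π / 2))
    (hω : ω ∈ Set.Ioo 0 (2 * π)) (hμ : 0 < μ) :
    ∃ C : ℝ, 0 < C ∧
      ∀ (σ₀ : ℝ), 0 < σ₀ →
      ∀ (s : ℂ), σ₀ < s.re →
        Complex.arg s ∈ Set.Ioo (-(π / 2) + δ) (π / 2 - δ) →
      ∀ g : ℝ → ℂ, ContDiffOn ℝ 1 g (Set.Icc (-1 : ℝ) 1) →
      (∫ r in Set.Ioo (0 : ℝ) 1,
          ‖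
            (-((deriv g (r * Real.cos (ω / 2)) - deriv g (-(r * Real.cos (ω / 2)))) *
                Real.sin (ω / 2) * Complex.exp (-s * μ * Real.sin (ω / 2) * r)) -
              s * μ * Real.cos (ω / 2) *
                (g (r * Real.cos (ω / 2)) - g (-(r * Real.cos (ω / 2)))) *
                Complex.exp (-s * μ * Real.sin (ω / 2) * r))‖ ^ 2) ≤
        C * ∫ τ in Set.Ioo (-1 : ℝ) 1, ‖deriv g τ‖ ^ 2 := by
  obtain ⟨hδ₀, hδ₁⟩ := hδ
  obtain ⟨hω₀, hω₁⟩ := hω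
  have hsin_δ : 0 < Real.sin δ := Real.sin_pos_of_pos_of_lt_pi hδ₀ (by linarith)
  have hc₂ : 0 < Real.sin (ω / 2) := Real.sin_pos_of_pos_of_lt_pi (by linarith) (by linarith)
  have hpyth := Real.sin_sq_add_cos_sq (ω / 2)
  have hc₁ : |Real.cos (ω / 2)| < 1 := abs_lt.2 ⟨by nlinarith, by nlinarith⟩
  refine ⟨8 / |Real.cos (ω / 2)| + 1 / (Real.sin δ ^ 2 * Real.sin (ω / 2) ^ 2), by positivity,
    fun σ₀ hσ₀ s hs hs_arg g hg ↦ ?_⟩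
  have hI : 0 ≤ ∫ τ in Ioo (-1 : ℝ) 1, ‖deriv g τ‖ ^ 2 :=
    setIntegral_nonneg measurableSet_Ioo fun _ _ ↦ by positivity
  rcases eq_or_ne (Real.cos (ω / 2)) 0 with hc₁₀ | hc₁₀
  · simpa [hc₁₀] using mul_nonneg (by positivity) hI
  have hs_re : 0 < s.re := hσ₀.trans hs
  have hs_sector : ‖s‖ * Real.sin δ ≤ s.re :=
    norm_mul_sin_le_re hδ₀.le (abs_le.2 ⟨by linarith [hs_arg.1], hs_arg.2.le⟩)
  refine (integral_norm_interfaceJump_sq_le hg hs_re hμ hc₁₀ hc₁ hc₂).trans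
    (mul_le_mul_of_nonneg_right (add_le_add ?_ ?_) hI)
  · gcongr
    nlinarith
  · rw [div_le_div_iff₀ (by positivity) (by positivity)]
    calc ‖s‖ ^ 2 * |Real.cos (ω / 2)| ^ 3 * (Real.sin δ ^ 2 * Real.sin (ω / 2) ^ 2)
        = |Real.cos (ω / 2)| ^ 3 * ((‖s‖ * Real.sin δ) ^ 2 * Real.sin (ω / 2) ^ 2) := by ring
      _ ≤ 1 * (s.re ^ 2 * Real.sin (ω / 2) ^ 2) := by
        gcongr
        exact pow_le_one₀ (abs_nonneg _) hc₁.le
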